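/- arXiv:2510.11972 — 5 statements merged into one kernel-verified Lean document; each statement's English description precedes it below -/
import Mathlib

section
/- Let (λ_j)_{j∈ℕ} be a strictly increasing sequence of positive real numbers with λ_j → ∞, and let (c_j)_{j∈ℕ} be strictly positive real numbers with Σ_j c_j < ∞. Define μ(k) := 1 + k² Σ_j c_j/(λ_j² − k²) for real k with k ≠ λ_j for all j. Then for every k > 0 with k ≠ λ_j for all j, μ is differentiable at k with derivative μ'(k) = Σ_j 2k λ_j² c_j/(λ_j² − k²)², and this derivative is strictly positive. Consequently μ is strictly monotone increasing on the interval (0, λ_0) and on each interval (λ_j, λ_{j+1}). -/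
/-!
Write `μ(t) = 1 + t² F(t²)` with `F(s) = ∑ cᵢ / (aᵢ - s)` and `aᵢ = λᵢ²`. Since `aᵢ → ∞` and no
`aᵢ` equals `k²`, the poles stay a distance `ε > 0` from `k²`, so near `k²` the termwise
derivatives `cᵢ / (aᵢ - s)²` are dominated by `|cᵢ| / (ε/2)²` and `F` may be differentiated term
by term. The product and chain rules then give
`μ'(k) = ∑ (2k cᵢ / (aᵢ - k²) + 2k³ cᵢ / (aᵢ - k²)²) = ∑ 2k aᵢ cᵢ / (aᵢ - k²)²`,
a series of positive terms, and the mean value theorem gives monotonicity on every interval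
free of the `λⱼ`.
-/

open Filter Set

section

variable {ι : Type*} {a c : ι → ℝ}

lemma Summable.div_of_le_abs {b : ι → ℝ} {ε : ℝ} (hc : Summable c) (hε : 0 < ε)
    (hb : ∀ i, ε ≤ |b i|) : Summable fun i => c i / b i :=
  (hc.abs.div_const ε).of_norm_bounded fun i => by
    rw [Real.norm_eq_abs, abs_div]
    exact div_le_div_of_nonneg_left (abs_nonneg _) hε (hb i)

lemma Filter.Tendsto.exists_pos_le_abs_sub (ha : Tendsto a cofinite atTop) {x : ℝ}
    (hx : ∀ i, a i ≠ x) : ∃ ε > 0, ∀ i, ε ≤ |a i - x| := by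
  cases isEmpty_or_nonempty ι with
  | inl _ => exact ⟨1, one_pos, isEmptyElim⟩
  | inr _ =>
    obtain ⟨i₀, hi₀⟩ :=
      (tendsto_abs_atTop_atTop.comp (tendsto_atTop_add_const_right _ (-x) ha)).exists_forall_le
    exact ⟨|a i₀ - x|, abs_pos.2 (sub_ne_zero.2 (hx i₀)),
      fun i => by simpa only [Function.comp_apply, sub_eq_add_neg] using hi₀ i⟩

lemma hasDerivAt_tsum_div_sub (hc : Summable c) {x ε : ℝ} (hε : 0 < ε)
    (hx : ∀ i, ε ≤ |a i - x|) :
    HasDerivAt (fun s => ∑' i, c i / (a i - s)) (∑' i, c i / (a i - x) ^ 2) x := by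
  have hsep : ∀ i, ∀ s ∈ Metric.ball x (ε / 2), ε / 2 ≤ |a i - s| := fun i s hs => by
    have := abs_sub_le (a i) s x
    rw [Metric.mem_ball, Real.dist_eq] at hs
    linarith [hx i]
  have hterm : ∀ i, ∀ s ∈ Metric.ball x (ε / 2),
      HasDerivAt (fun s => c i / (a i - s)) (c i / (a i - s) ^ 2) s := fun i s hs => by
    have hne : a i - s ≠ 0 := abs_pos.1 ((half_pos hε).trans_le (hsep i s hs))
    have h := (hasDerivAt_const s (c i)).div ((hasDerivAt_id' s).const_sub (a i)) hne
    rwa [zero_mul, zero_sub, mul_neg_one, neg_neg] at h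
  have hbound : ∀ i, ∀ s ∈ Metric.ball x (ε / 2),
      ‖c i / (a i - s) ^ 2‖ ≤ |c i| / (ε / 2) ^ 2 := fun i s hs => by
    rw [Real.norm_eq_abs, abs_div, abs_pow]
    exact div_le_div_of_nonneg_left (abs_nonneg _) (by positivity)
      (pow_le_pow_left₀ (half_pos hε).le (hsep i s hs) 2)
  exact hasDerivAt_tsum_of_isPreconnected (hc.abs.div_const _) Metric.isOpen_ball
    (convex_ball x _).isPreconnected hterm hbound (Metric.mem_ball_self (half_pos hε))
    (hc.div_of_le_abs hε hx) (Metric.mem_ball_self (half_pos hε))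

lemma hasSum_two_mul_mul_div_sub_sq (hc : Summable c) {k ε : ℝ} (hε : 0 < ε)
    (hk : ∀ i, ε ≤ |a i - k ^ 2|) :
    HasSum (fun i => 2 * k * a i * c i / (a i - k ^ 2) ^ 2)
      (2 * k * ∑' i, c i / (a i - k ^ 2) +
        k ^ 2 * ((∑' i, c i / (a i - k ^ 2) ^ 2) * (2 * k))) := by
  have hk_sq : ∀ i, ε ^ 2 ≤ |(a i - k ^ 2) ^ 2| := fun i => by
    rw [abs_pow]; exact pow_le_pow_left₀ hε.le (hk i) 2
  have h1 := (hc.div_of_le_abs hε hk).hasSum.mul_left (2 * k)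
  have h2 := ((hc.div_of_le_abs (pow_pos hε 2) hk_sq).hasSum.mul_right (2 * k)).mul_left (k ^ 2)
  refine (h1.add h2).congr_fun fun i => ?_
  have hne : a i - k ^ 2 ≠ 0 := abs_pos.1 (hε.trans_le (hk i))
  field_simp
  ring

lemma hasDerivAt_one_add_sq_mul_tsum (hc : Summable c) {k ε : ℝ} (hε : 0 < ε)
    (hk : ∀ i, ε ≤ |a i - k ^ 2|) :
    HasDerivAt (fun t => 1 + t ^ 2 * ∑' i, c i / (a i - t ^ 2))
      (∑' i, 2 * k * a i * c i / (a i - k ^ 2) ^ 2) k := by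
  have hsq : HasDerivAt (fun t : ℝ => t ^ 2) (2 * k) k := by simpa using hasDerivAt_pow 2 k
  rw [(hasSum_two_mul_mul_div_sub_sq hc hε hk).tsum_eq]
  have hF := (hasDerivAt_tsum_div_sub hc hε hk).comp (h := fun t : ℝ => t ^ 2) k hsq
  exact (hsq.mul hF).const_add 1

end

lemma strictMonoOn_of_hasDerivAt_pos {D : Set ℝ} (hD : Convex ℝ D) {f f' : ℝ → ℝ}
    (hf : ∀ x ∈ D, HasDerivAt f (f' x) x) (hf' : ∀ x ∈ D, 0 < f' x) : StrictMonoOn f D :=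
  strictMonoOn_of_hasDerivWithinAt_pos hD (fun x hx => (hf x hx).continuousAt.continuousWithinAt)
    (fun x hx => (hf x (interior_subset hx)).hasDerivWithinAt)
    fun x hx => hf' x (interior_subset hx)

lemma hasDerivAt_and_deriv_pos_of_tendsto_atTop {lam c : ℕ → ℝ} (hpos : ∀ j, 0 < lam j)
    (htop : Tendsto lam atTop atTop) (hc : ∀ j, 0 < c j) (hsum : Summable c) {k : ℝ}
    (hk : 0 < k) (hne : ∀ j, k ≠ lam j) :
    HasDerivAt (fun t : ℝ => 1 + t ^ 2 * ∑' j, c j / (lam j ^ 2 - t ^ 2))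
      (∑' j, 2 * k * lam j ^ 2 * c j / (lam j ^ 2 - k ^ 2) ^ 2) k ∧
    0 < ∑' j, 2 * k * lam j ^ 2 * c j / (lam j ^ 2 - k ^ 2) ^ 2 := by
  have hne_sq : ∀ j, lam j ^ 2 ≠ k ^ 2 := fun j h =>
    hne j ((sq_eq_sq₀ (hpos j).le hk.le).1 h).symm
  have htop_sq : Tendsto (fun j => lam j ^ 2) cofinite atTop :=
    Nat.cofinite_eq_atTop ▸ (tendsto_pow_atTop two_ne_zero).comp htop
  obtain ⟨ε, hε, hsep⟩ := htop_sq.exists_pos_le_abs_sub hne_sq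
  refine ⟨hasDerivAt_one_add_sq_mul_tsum hsum hε hsep,
    (hasSum_two_mul_mul_div_sub_sq hsum hε hsep).summable.tsum_pos
      (fun j => by have := hc j; positivity) 0 ?_⟩
  have := hc 0
  have := hpos 0
  have : lam 0 ^ 2 - k ^ 2 ≠ 0 := sub_ne_zero.2 (hne_sq 0)
  positivity

theorem effective_coefficient_strictMono (lam : ℕ → ℝ) (hmono : StrictMono lam)
    (hpos : ∀ j, 0 < lam j) (htop : Tendsto lam atTop atTop)
    (c : ℕ → ℝ) (hc : ∀ j, 0 < c j) (hsum : Summable c) :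
    (∀ k : ℝ, 0 < k → (∀ j, k ≠ lam j) →
      HasDerivAt (fun t : ℝ => 1 + t ^ 2 * ∑' j, c j / ((lam j) ^ 2 - t ^ 2))
        (∑' j, 2 * k * (lam j) ^ 2 * c j / ((lam j) ^ 2 - k ^ 2) ^ 2) k ∧
      0 < ∑' j, 2 * k * (lam j) ^ 2 * c j / ((lam j) ^ 2 - k ^ 2) ^ 2) ∧
    StrictMonoOn (fun t : ℝ => 1 + t ^ 2 * ∑' j, c j / ((lam j) ^ 2 - t ^ 2))
      (Set.Ioo 0 (lam 0)) ∧
    (∀ j, StrictMonoOn (fun t : ℝ => 1 + t ^ 2 * ∑' i, c i / ((lam i) ^ 2 - t ^ 2))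
      (Set.Ioo (lam j) (lam (j + 1)))) := by
  have hderiv := fun k (hk : 0 < k) hne =>
    hasDerivAt_and_deriv_pos_of_tendsto_atTop hpos htop hc hsum hk hne
  have hmonoOn : ∀ p q, 0 ≤ p → (∀ x ∈ Ioo p q, ∀ j, x ≠ lam j) →
      StrictMonoOn (fun t : ℝ => 1 + t ^ 2 * ∑' j, c j / (lam j ^ 2 - t ^ 2)) (Ioo p q) :=
    fun p q hp hgap => strictMonoOn_of_hasDerivAt_pos (convex_Ioo p q)
      (fun x hx => (hderiv x (hp.trans_lt hx.1) (hgap x hx)).1)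
      (fun x hx => (hderiv x (hp.trans_lt hx.1) (hgap x hx)).2)
  refine ⟨hderiv, hmonoOn 0 (lam 0) le_rfl fun x hx j => ?_, fun j => hmonoOn _ _ (hpos j).le
    fun x hx i => (hmono.monotone.ne_of_lt_of_lt_nat j hx.1 hx.2 i).symm⟩
  exact (hx.2.trans_le (hmono.monotone j.zero_le)).ne
end

section
/- Let (λ_j)_{j∈ℕ} be a strictly increasing sequence of positive real numbers with λ_j → ∞, and let (c_j)_{j∈ℕ} be strictly positive real numbers with Σ_j c_j < ∞. Define μ(k) := 1 + k² Σ_j c_j/(λ_j² − k²) for real k with k ≠ λ_i for all i. Then for every j there exists exactly one k in the open interval (λ_j, λ_{j+1}) with μ(k) = 0. -/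
/-!
Write `μ(k) = 1 + ∑ cᵢ r(λᵢ, k)` with `r(L, k) = k² / (L² - k²)`. For `k ∈ (λⱼ, λⱼ₊₁)` every
`r(λᵢ, ·)` is strictly increasing and squeezed between `r(λⱼ, ·) < 0` and `r(λⱼ₊₁, ·) > 0`.
The squeeze gives summability and locally uniform bounds (hence continuity of `μ`), and
`1 + cⱼ₊₁ r(λⱼ₊₁, k) + C r(λⱼ, k) ≤ μ(k) ≤ 1 + cⱼ r(λⱼ, k) + C r(λⱼ₊₁, k)` with `C = ∑ cᵢ`,
so `μ` tends to `-∞` at `λⱼ⁺` and to `+∞` at `λⱼ₊₁⁻`. The intermediate value theorem gives a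
zero, strict monotonicity its uniqueness.
-/

open Filter Set Topology

theorem ContinuousOn.surjOn_Ioo_of_tendsto {α δ : Type*} [ConditionallyCompleteLinearOrder α]
    [TopologicalSpace α] [OrderTopology α] [DenselyOrdered α] [LinearOrder δ] [TopologicalSpace δ]
    [OrderClosedTopology δ] {f : α → δ} {a b : α} (hab : a < b) (hf : ContinuousOn f (Ioo a b))
    (hbot : Tendsto f (𝓝[>] a) atBot) (htop : Tendsto f (𝓝[<] b) atTop) :
    SurjOn f (Ioo a b) univ := by
  intro y _
  have : (𝓝[>] a).NeBot := nhdsGT_neBot_of_exists_gt ⟨b, hab⟩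
  have : (𝓝[<] b).NeBot := nhdsLT_neBot_of_exists_lt ⟨a, hab⟩
  obtain ⟨x₁, hx₁y, hx₁⟩ :=
    ((hbot.eventually (eventually_le_atBot y)).and (Ioo_mem_nhdsGT hab)).exists
  obtain ⟨x₂, hyx₂, hx₂⟩ :=
    ((htop.eventually (eventually_ge_atTop y)).and (Ioo_mem_nhdsLT hab)).exists
  exact hf.surjOn_Icc hx₁ hx₂ ⟨hx₁y, hyx₂⟩

theorem tsum_le_add_tsum_of_le {ι : Type*} [DecidableEq ι] {f g : ι → ℝ} (hf : Summable f)
    (hg : Summable g) {j : ι} (hfg : ∀ i ≠ j, f i ≤ g i) (hgj : 0 ≤ g j) :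
    ∑' i, f i ≤ f j + ∑' i, g i := by
  have hle : f ≤ fun i => (Pi.single j (f j) : ι → ℝ) i + g i := by
    intro i
    rcases eq_or_ne i j with rfl | hi
    · simpa using hgj
    · simpa [hi] using hfg i hi
  calc ∑' i, f i ≤ ∑' i, ((Pi.single j (f j) : ι → ℝ) i + g i) :=
        hf.tsum_le_tsum hle ((hasSum_pi_single j (f j)).summable.add hg)
    _ = f j + ∑' i, g i := by
        rw [(hasSum_pi_single j (f j)).summable.tsum_add hg, tsum_pi_single]

theorem add_tsum_le_tsum_of_le {ι : Type*} [DecidableEq ι] {f g : ι → ℝ} (hf : Summable f)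
    (hg : Summable g) {j : ι} (hgf : ∀ i ≠ j, g i ≤ f i) (hgj : g j ≤ 0) :
    f j + ∑' i, g i ≤ ∑' i, f i := by
  have := tsum_le_add_tsum_of_le hf.neg hg.neg (fun i hi => neg_le_neg (hgf i hi))
    (neg_nonneg.2 hgj)
  rw [tsum_neg, tsum_neg] at this
  linarith

theorem Summable.mul_of_forall_mem_Icc {ι : Type*} {c f : ι → ℝ} {a b : ℝ} (hc : Summable c)
    (hf : ∀ i, f i ∈ Icc a b) : Summable fun i => c i * f i :=
  (hc.norm.mul_right (max |a| |b|)).of_norm_bounded fun i => by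
    rw [norm_mul, Real.norm_eq_abs]
    exact mul_le_mul_of_nonneg_left (abs_le_max_abs_abs (hf i).1 (hf i).2) (abs_nonneg _)

theorem div_sub_lt_div_sub {M s t : ℝ} (hM : 0 < M) (hst : s < t) (hsign : 0 < (M - s) * (M - t)) :
    s / (M - s) < t / (M - t) := by
  obtain ⟨hs, ht⟩ := mul_ne_zero_iff.1 hsign.ne'
  have : t / (M - t) - s / (M - s) = M * (t - s) / ((M - s) * (M - t)) := by
    field_simp
    ring
  linarith [div_pos (mul_pos hM (sub_pos.2 hst)) hsign]

noncomputable def resonance (L k : ℝ) : ℝ := k ^ 2 / (L ^ 2 - k ^ 2)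

section Resonance

variable {L L' k : ℝ}

theorem resonance_lt_resonance {x y : ℝ} (hL : 0 < L) (hx : 0 ≤ x) (hxy : x < y)
    (hLxy : L < x ∨ y < L) : resonance L x < resonance L y := by
  refine div_sub_lt_div_sub (by positivity) (by gcongr) ?_
  rcases hLxy with h | h
  · exact mul_pos_of_neg_of_neg (by nlinarith) (by nlinarith)
  · exact mul_pos (by nlinarith) (by nlinarith)

theorem resonance_neg (hL : 0 ≤ L) (hLk : L < k) : resonance L k < 0 :=
  div_neg_of_pos_of_neg (by nlinarith) (by nlinarith)

theorem resonance_pos (hk : 0 < k) (hkL : k < L) : 0 < resonance L k :=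
  div_pos (by positivity) (by nlinarith)

theorem resonance_le_resonance_of_lt (hL : 0 ≤ L) (hLL' : L ≤ L') (hL'k : L' < k) :
    resonance L' k ≤ resonance L k :=
  mul_le_mul_of_nonneg_left ((inv_le_inv_of_neg (by nlinarith) (by nlinarith)).2 (by nlinarith))
    (sq_nonneg k)

theorem resonance_le_resonance_of_gt (hk : 0 ≤ k) (hkL' : k < L') (hL'L : L' ≤ L) :
    resonance L k ≤ resonance L' k :=
  div_le_div_of_nonneg_left (sq_nonneg k) (by nlinarith) (by nlinarith)

theorem continuousAt_resonance (h : L ^ 2 ≠ k ^ 2) : ContinuousAt (resonance L) k :=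
  (continuousAt_id.pow 2).div (continuousAt_const.sub (continuousAt_id.pow 2)) (sub_ne_zero.2 h)

theorem tendsto_resonance_nhdsGT (hL : 0 < L) : Tendsto (resonance L) (𝓝[>] L) atBot := by
  have hden : Tendsto (fun k : ℝ => L ^ 2 - k ^ 2) (𝓝[>] L) (𝓝[<] 0) := by
    refine tendsto_nhdsWithin_of_tendsto_nhds_of_eventually_within _ ?_ ?_
    · exact tendsto_nhdsWithin_of_tendsto_nhds
        ((by fun_prop : Continuous fun k : ℝ => L ^ 2 - k ^ 2).tendsto' L 0 (by ring))
    · filter_upwards [self_mem_nhdsWithin] with k (hk : L < k)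
      simp only [mem_Iio, sub_neg]
      nlinarith
  have hnum : Tendsto (fun k : ℝ => k ^ 2) (𝓝[>] L) (𝓝 (L ^ 2)) :=
    tendsto_nhdsWithin_of_tendsto_nhds ((continuous_pow 2).tendsto L)
  exact hnum.pos_mul_atBot (by positivity) (tendsto_inv_nhdsLT_zero.comp hden)

theorem tendsto_resonance_nhdsLT (hL : 0 < L) : Tendsto (resonance L) (𝓝[<] L) atTop := by
  have hden : Tendsto (fun k : ℝ => L ^ 2 - k ^ 2) (𝓝[<] L) (𝓝[>] 0) := by
    refine tendsto_nhdsWithin_of_tendsto_nhds_of_eventually_within _ ?_ ?_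
    · exact tendsto_nhdsWithin_of_tendsto_nhds
        ((by fun_prop : Continuous fun k : ℝ => L ^ 2 - k ^ 2).tendsto' L 0 (by ring))
    · filter_upwards [Ioo_mem_nhdsLT hL] with k hk
      simp only [mem_Ioi, sub_pos]
      nlinarith [hk.1, hk.2]
  have hnum : Tendsto (fun k : ℝ => k ^ 2) (𝓝[<] L) (𝓝 (L ^ 2)) :=
    tendsto_nhdsWithin_of_tendsto_nhds ((continuous_pow 2).tendsto L)
  exact hnum.pos_mul_atTop (by positivity) (tendsto_inv_nhdsGT_zero.comp hden)

end Resonance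

theorem Monotone.apply_le_or_apply_succ_le {α : Type*} [Preorder α] {f : ℕ → α} (hf : Monotone f)
    (i j : ℕ) : f i ≤ f j ∨ f (j + 1) ≤ f i :=
  (le_or_gt i j).imp (hf ·) (hf ·)

noncomputable def effectiveCoeff (lam c : ℕ → ℝ) (k : ℝ) : ℝ :=
  1 + k ^ 2 * ∑' i, c i / (lam i ^ 2 - k ^ 2)

section EffectiveCoeff

variable {lam c : ℕ → ℝ} {j : ℕ} {k : ℝ}

theorem effectiveCoeff_eq_tsum_mul_resonance :
    effectiveCoeff lam c k = 1 + ∑' i, c i * resonance (lam i) k := by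
  simp only [effectiveCoeff, resonance, ← tsum_mul_left, mul_div_left_comm]

theorem resonance_mem_Icc (hmono : Monotone lam) (hpos : ∀ i, 0 < lam i)
    (hk : k ∈ Ioo (lam j) (lam (j + 1))) (i : ℕ) :
    resonance (lam i) k ∈ Icc (resonance (lam j) k) (resonance (lam (j + 1)) k) := by
  have hk0 : 0 < k := (hpos j).trans hk.1
  rcases hmono.apply_le_or_apply_succ_le i j with h | h
  · exact ⟨resonance_le_resonance_of_lt (hpos i).le h hk.1,
      ((resonance_neg (hpos i).le (h.trans_lt hk.1)).trans (resonance_pos hk0 hk.2)).le⟩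
  · exact ⟨((resonance_neg (hpos j).le hk.1).trans (resonance_pos hk0 (hk.2.trans_le h))).le,
      resonance_le_resonance_of_gt hk0.le hk.2 h⟩

theorem continuousOn_resonance (hmono : Monotone lam) (hpos : ∀ i, 0 < lam i) (i : ℕ) :
    ContinuousOn (resonance (lam i)) (Ioo (lam j) (lam (j + 1))) := by
  intro k hk
  refine (continuousAt_resonance ?_).continuousWithinAt
  have hk0 : 0 < k := (hpos j).trans hk.1
  rcases hmono.apply_le_or_apply_succ_le i j with h | h
  · exact (pow_lt_pow_left₀ (h.trans_lt hk.1) (hpos i).le two_ne_zero).ne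
  · exact (pow_lt_pow_left₀ (hk.2.trans_le h) hk0.le two_ne_zero).ne'

theorem resonance_lt_resonance_of_mem_Ioo (hmono : Monotone lam) (hpos : ∀ i, 0 < lam i)
    {x y : ℝ} (hx : x ∈ Ioo (lam j) (lam (j + 1))) (hy : y ∈ Ioo (lam j) (lam (j + 1)))
    (hxy : x < y) (i : ℕ) : resonance (lam i) x < resonance (lam i) y :=
  resonance_lt_resonance (hpos i) ((hpos j).trans hx.1).le hxy
    ((hmono.apply_le_or_apply_succ_le i j).imp (·.trans_lt hx.1) hy.2.trans_le)

theorem summable_mul_resonance (hmono : Monotone lam) (hpos : ∀ i, 0 < lam i) (hsum : Summable c)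
    (hk : k ∈ Ioo (lam j) (lam (j + 1))) : Summable fun i => c i * resonance (lam i) k :=
  hsum.mul_of_forall_mem_Icc (resonance_mem_Icc hmono hpos hk)

theorem effectiveCoeff_strictMonoOn (hmono : Monotone lam) (hpos : ∀ i, 0 < lam i)
    (hc : ∀ i, 0 < c i) (hsum : Summable c) :
    StrictMonoOn (effectiveCoeff lam c) (Ioo (lam j) (lam (j + 1))) := by
  intro x hx y hy hxy
  have hterm (i : ℕ) : c i * resonance (lam i) x < c i * resonance (lam i) y :=
    mul_lt_mul_of_pos_left (resonance_lt_resonance_of_mem_Ioo hmono hpos hx hy hxy i) (hc i)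
  simp only [effectiveCoeff_eq_tsum_mul_resonance, add_lt_add_iff_left]
  exact (summable_mul_resonance hmono hpos hsum hx).tsum_lt_tsum (fun i => (hterm i).le) (hterm j)
    (summable_mul_resonance hmono hpos hsum hy)

theorem effectiveCoeff_le (hmono : Monotone lam) (hpos : ∀ i, 0 < lam i) (hc : ∀ i, 0 ≤ c i)
    (hsum : Summable c) (hk : k ∈ Ioo (lam j) (lam (j + 1))) :
    effectiveCoeff lam c k ≤
      1 + c j * resonance (lam j) k + (∑' i, c i) * resonance (lam (j + 1)) k := by
  have := tsum_le_add_tsum_of_le (summable_mul_resonance hmono hpos hsum hk)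
    (hsum.mul_right (resonance (lam (j + 1)) k))
    (fun i _ => mul_le_mul_of_nonneg_left (resonance_mem_Icc hmono hpos hk i).2 (hc i))
    (mul_nonneg (hc j) (resonance_pos ((hpos j).trans hk.1) hk.2).le)
  rw [tsum_mul_right] at this
  rw [effectiveCoeff_eq_tsum_mul_resonance]
  linarith

theorem le_effectiveCoeff (hmono : Monotone lam) (hpos : ∀ i, 0 < lam i) (hc : ∀ i, 0 ≤ c i)
    (hsum : Summable c) (hk : k ∈ Ioo (lam j) (lam (j + 1))) :
    1 + c (j + 1) * resonance (lam (j + 1)) k + (∑' i, c i) * resonance (lam j) k ≤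
      effectiveCoeff lam c k := by
  have := add_tsum_le_tsum_of_le (summable_mul_resonance hmono hpos hsum hk)
    (hsum.mul_right (resonance (lam j) k))
    (fun i _ => mul_le_mul_of_nonneg_left (resonance_mem_Icc hmono hpos hk i).1 (hc i))
    (mul_nonpos_of_nonneg_of_nonpos (hc (j + 1)) (resonance_neg (hpos j).le hk.1).le)
  rw [tsum_mul_right] at this
  rw [effectiveCoeff_eq_tsum_mul_resonance]
  linarith

theorem sq_ne_sq_succ (hmono : StrictMono lam) (hpos : ∀ i, 0 < lam i) (j : ℕ) :
    lam j ^ 2 ≠ lam (j + 1) ^ 2 :=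
  (pow_lt_pow_left₀ (hmono j.lt_succ_self) (hpos j).le two_ne_zero).ne

theorem tendsto_effectiveCoeff_nhdsGT (hmono : StrictMono lam) (hpos : ∀ i, 0 < lam i)
    (hc : ∀ i, 0 < c i) (hsum : Summable c) :
    Tendsto (effectiveCoeff lam c) (𝓝[>] lam j) atBot := by
  have hbound : Tendsto
      (fun k => 1 + c j * resonance (lam j) k + (∑' i, c i) * resonance (lam (j + 1)) k)
      (𝓝[>] lam j) atBot :=
    (tendsto_atBot_add_const_left _ 1
      ((tendsto_resonance_nhdsGT (hpos j)).const_mul_atBot (hc j))).atBot_add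
      (((continuousAt_resonance (sq_ne_sq_succ hmono hpos j).symm).tendsto.mono_left
        nhdsWithin_le_nhds).const_mul _)
  refine tendsto_atBot_mono' _ ?_ hbound
  filter_upwards [Ioo_mem_nhdsGT (hmono j.lt_succ_self)] with k hk
  exact effectiveCoeff_le hmono.monotone hpos (fun i => (hc i).le) hsum hk

theorem tendsto_effectiveCoeff_nhdsLT (hmono : StrictMono lam) (hpos : ∀ i, 0 < lam i)
    (hc : ∀ i, 0 < c i) (hsum : Summable c) :
    Tendsto (effectiveCoeff lam c) (𝓝[<] lam (j + 1)) atTop := by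
  have hbound : Tendsto
      (fun k => 1 + c (j + 1) * resonance (lam (j + 1)) k + (∑' i, c i) * resonance (lam j) k)
      (𝓝[<] lam (j + 1)) atTop :=
    (tendsto_atTop_add_const_left _ 1
      ((tendsto_resonance_nhdsLT (hpos (j + 1))).const_mul_atTop (hc (j + 1)))).atTop_add
      (((continuousAt_resonance (sq_ne_sq_succ hmono hpos j)).tendsto.mono_left
        nhdsWithin_le_nhds).const_mul _)
  refine tendsto_atTop_mono' _ ?_ hbound
  filter_upwards [Ioo_mem_nhdsLT (hmono j.lt_succ_self)] with k hk
  exact le_effectiveCoeff hmono.monotone hpos (fun i => (hc i).le) hsum hk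

theorem continuousOn_effectiveCoeff (hmono : Monotone lam) (hpos : ∀ i, 0 < lam i)
    (hsum : Summable c) : ContinuousOn (effectiveCoeff lam c) (Ioo (lam j) (lam (j + 1))) := by
  intro x hx
  obtain ⟨p, hjp, hpx⟩ := exists_between hx.1
  obtain ⟨q, hxq, hqj⟩ := exists_between hx.2
  have hsub : Icc p q ⊆ Ioo (lam j) (lam (j + 1)) := Icc_subset_Ioo hjp hqj
  have hres (i : ℕ) : ContinuousOn (resonance (lam i)) (Icc p q) :=
    (continuousOn_resonance hmono hpos i).mono hsub
  obtain ⟨M, hM⟩ := isCompact_Icc.exists_bound_of_continuousOn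
    (f := fun k => max |resonance (lam j) k| |resonance (lam (j + 1)) k|)
    ((hres j).abs.sup (hres (j + 1)).abs)
  have hbound (i : ℕ) (k : ℝ) (hk : k ∈ Icc p q) : ‖c i * resonance (lam i) k‖ ≤ ‖c i‖ * M := by
    have hmem := resonance_mem_Icc hmono hpos (hsub hk) i
    rw [norm_mul]
    gcongr
    exact (abs_le_max_abs_abs hmem.1 hmem.2).trans ((le_abs_self _).trans (hM k hk))
  have hcont : ContinuousOn (fun k => 1 + ∑' i, c i * resonance (lam i) k) (Icc p q) :=
    continuousOn_const.add
      (continuousOn_tsum (fun i => continuousOn_const.mul (hres i)) (hsum.norm.mul_right M) hbound)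
  simp only [← effectiveCoeff_eq_tsum_mul_resonance] at hcont
  exact (hcont.continuousAt (Icc_mem_nhds hpx hxq)).continuousWithinAt

end EffectiveCoeff

theorem effective_coefficient_unique_zero_general (lam : ℕ → ℝ) (hmono : StrictMono lam)
    (hpos : ∀ j, 0 < lam j)
    (c : ℕ → ℝ) (hc : ∀ j, 0 < c j) (hsum : Summable c) :
    ∀ j, ∃! k : ℝ, k ∈ Set.Ioo (lam j) (lam (j + 1)) ∧
      1 + k ^ 2 * ∑' i, c i / ((lam i) ^ 2 - k ^ 2) = 0 := by
  intro j
  obtain ⟨k, hk, hk0⟩ :=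
    (continuousOn_effectiveCoeff hmono.monotone hpos hsum).surjOn_Ioo_of_tendsto
      (hmono j.lt_succ_self) (tendsto_effectiveCoeff_nhdsGT hmono hpos hc hsum)
      (tendsto_effectiveCoeff_nhdsLT hmono hpos hc hsum) (mem_univ 0)
  exact ⟨k, ⟨hk, hk0⟩, fun k' hk' =>
    (effectiveCoeff_strictMonoOn hmono.monotone hpos hc hsum).injOn hk'.1 hk (hk'.2.trans hk0.symm)⟩

theorem effective_coefficient_unique_zero (lam : ℕ → ℝ) (hmono : StrictMono lam)
    (hpos : ∀ j, 0 < lam j) (htop : Tendsto lam atTop atTop)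
    (c : ℕ → ℝ) (hc : ∀ j, 0 < c j) (hsum : Summable c) :
    ∀ j, ∃! k : ℝ, k ∈ Set.Ioo (lam j) (lam (j + 1)) ∧
      1 + k ^ 2 * ∑' i, c i / ((lam i) ^ 2 - k ^ 2) = 0 :=
  effective_coefficient_unique_zero_general lam hmono hpos c hc hsum
end

section
/- Let (λ_j)_{j∈ℕ} be positive real numbers with λ_j → ∞, and let (c_j)_{j∈ℕ} be nonnegative real numbers with θ := Σ_j c_j < 1. Define μ(z) := 1 + z² Σ_j c_j/(λ_j² − z²) for z ∈ ℂ with z² ≠ λ_j² for all j (which holds automatically when Im z > 0). Then for every z ∈ ℂ with Im z > 0, the complex number z² μ(z) is not a nonnegative real number; that is, z² μ(z) ∈ ℂ ∖ [0, ∞). -/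
/-!
Put `w = z²`, which lies off `[0, ∞)` when `Im z > 0`. The real-linear functional
`ℓ ζ = ⟪w - ‖w‖, ζ⟫_ℝ = Re (ζ (w̄ - ‖w‖))` is `≤ 0` on `[0, ∞)` and `> 0` at `w`, and a direct
computation gives `ℓ (a w / (a - w)) ≥ 0` for every `a ≥ 0`. Since
`w² / (a - w) = a w / (a - w) - w`, each term of the series satisfies `ℓ (w² / (a - w)) ≥ -ℓ w`,
so `ℓ (w μ) ≥ (1 - θ) ℓ w > 0`, and `w μ` cannot be a nonnegative real.
The same functional bounds `‖a - w‖` from below uniformly in `a ≥ 0`, which makes the series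
summable.
-/

open scoped ComplexOrder InnerProductSpace

namespace Complex

variable {w : ℂ}

theorem re_lt_norm_of_not_nonneg (hw : ¬ 0 ≤ w) : w.re < ‖w‖ :=
  (re_le_norm w).lt_of_ne (mt re_eq_norm.mp hw)

theorem inner_sub_norm_self_pos (hw : ¬ 0 ≤ w) : 0 < ⟪w - ‖w‖, w⟫_ℝ := by
  have hre := re_lt_norm_of_not_nonneg hw
  have hnorm : 0 < ‖w‖ := by linarith [neg_abs_le w.re, abs_re_le_norm w]
  have : ⟪w - ‖w‖, w⟫_ℝ = ‖w‖ * (‖w‖ - w.re) := by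
    rw [Complex.inner, map_sub, conj_ofReal, mul_sub, mul_conj, normSq_eq_norm_sq, sub_re,
      re_mul_ofReal, ofReal_re]
    ring
  rw [this]
  exact mul_pos hnorm (sub_pos.2 hre)

theorem inner_sub_norm_nonpos (w : ℂ) {ζ : ℂ} (hζ : 0 ≤ ζ) : ⟪w - ‖w‖, ζ⟫_ℝ ≤ 0 := by
  obtain ⟨hre, him⟩ := le_def.1 hζ
  rw [zero_re] at hre
  rw [zero_im] at him
  rw [Complex.inner]
  simp only [mul_re, map_sub, conj_ofReal, sub_re, sub_im, conj_re, conj_im, ofReal_re, ofReal_im,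
    ← him]
  nlinarith [re_le_norm w]

theorem exists_pos_forall_nonneg_le_norm_sub (hw : ¬ 0 ≤ w) :
    ∃ δ > 0, ∀ ζ : ℂ, 0 ≤ ζ → δ ≤ ‖w - ζ‖ := by
  set u : ℂ := w - ‖w‖
  have hpos := inner_sub_norm_self_pos hw
  have hu : 0 < ‖u‖ := norm_pos_iff.2 fun h => by simp [u, h] at hpos
  refine ⟨⟪u, w⟫_ℝ / ‖u‖, div_pos hpos hu, fun ζ hζ => ?_⟩
  rw [div_le_iff₀' hu]
  calc ⟪u, w⟫_ℝ ≤ ⟪u, w⟫_ℝ - ⟪u, ζ⟫_ℝ := by linarith [inner_sub_norm_nonpos w hζ]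
    _ = ⟪u, w - ζ⟫_ℝ := (inner_sub_right _ _ _).symm
    _ ≤ ‖u‖ * ‖w - ζ‖ := real_inner_le_norm _ _

theorem summable_ofReal_div_ofReal_sub {ι : Type*} {a c : ι → ℝ} (hw : ¬ 0 ≤ w)
    (ha : ∀ j, 0 ≤ a j) (hc : Summable c) : Summable fun j => (c j : ℂ) / (a j - w) := by
  obtain ⟨δ, hδ, hle⟩ := exists_pos_forall_nonneg_le_norm_sub hw
  refine Summable.of_norm_bounded (hc.abs.div_const δ) fun j => ?_
  rw [norm_div, norm_real, Real.norm_eq_abs, norm_sub_rev]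
  exact div_le_div_of_nonneg_left (abs_nonneg _) hδ (hle _ (zero_le_real.2 (ha j)))

theorem inner_sub_norm_mul_div_ofReal_sub_nonneg (w : ℂ) {a : ℝ} (ha : 0 ≤ a) :
    0 ≤ ⟪w - ‖w‖, a * w / (a - w)⟫_ℝ := by
  have key : ⟪w - ‖w‖, a * w / (a - w)⟫_ℝ
      = a * ‖w‖ * ((a + ‖w‖) * (‖w‖ - w.re)) / normSq (a - w) := by
    have hn : ‖w‖ ^ 2 = w.re ^ 2 + w.im ^ 2 := by rw [← normSq_eq_norm_sq, normSq_apply]; ring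
    rw [Complex.inner]
    simp only [mul_re, div_re, div_im, mul_im, map_sub, conj_ofReal, sub_re, sub_im, conj_re,
      conj_im, ofReal_re, ofReal_im]
    by_cases hN : normSq (a - w) = 0
    · simp [hN]
    field_simp
    linear_combination a * (w.re - a - ‖w‖) * hn
  rw [key]
  have hgap := sub_nonneg.2 (re_le_norm w)
  exact div_nonneg (by positivity) (normSq_nonneg _)

theorem neg_inner_sub_norm_self_le_inner_sq_div (hw : ¬ 0 ≤ w) {a : ℝ} (ha : 0 ≤ a) :
    -⟪w - ‖w‖, w⟫_ℝ ≤ ⟪w - ‖w‖, w ^ 2 / (a - w)⟫_ℝ := by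
  have hne : (a : ℂ) - w ≠ 0 := sub_ne_zero.2 fun h => hw (h ▸ zero_le_real.2 ha)
  have hsplit : w ^ 2 / (a - w) = a * w / (a - w) - w := by field_simp; ring
  rw [hsplit, inner_sub_right]
  linarith [inner_sub_norm_mul_div_ofReal_sub_nonneg w ha]

theorem not_nonneg_mul_one_add_mul_tsum_div {ι : Type*} {a c : ι → ℝ} (ha : ∀ j, 0 ≤ a j)
    (hc : ∀ j, 0 ≤ c j) (hsum : Summable c) (hθ : ∑' j, c j < 1) (hw : ¬ 0 ≤ w) :
    ¬ 0 ≤ w * (1 + w * ∑' j, (c j : ℂ) / (a j - w)) := by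
  set u : ℂ := w - ‖w‖
  have hS := summable_ofReal_div_ofReal_sub hw ha hsum
  have hexpand : w * (1 + w * ∑' j, (c j : ℂ) / (a j - w)) =
      w + ∑' j, c j • (w ^ 2 / (a j - w)) := by
    rw [mul_add, mul_one, ← mul_assoc, ← tsum_mul_left]
    congr 1
    exact tsum_congr fun j => by rw [real_smul]; ring
  have hterms : Summable fun j => c j • (w ^ 2 / (a j - w)) :=
    (hS.mul_left (w ^ 2)).congr fun j => by rw [real_smul]; ring
  have hinner :
      (1 - ∑' j, c j) * ⟪u, w⟫_ℝ ≤ ⟪u, w * (1 + w * ∑' j, (c j : ℂ) / (a j - w))⟫_ℝ := by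
    have hle : ∑' j, c j * -⟪u, w⟫_ℝ ≤ ∑' j, ⟪u, c j • (w ^ 2 / (a j - w))⟫_ℝ := by
      refine Summable.tsum_le_tsum (fun j => ?_) (hsum.mul_right _) (hterms.mapL (innerSL ℝ u))
      rw [real_inner_smul_right]
      exact mul_le_mul_of_nonneg_left (neg_inner_sub_norm_self_le_inner_sq_div hw (ha j)) (hc j)
    rw [hexpand, inner_add_right, ← innerSL_apply_apply ℝ u (tsum _),
      (innerSL ℝ u).map_tsum hterms]
    simp only [innerSL_apply_apply]
    rw [tsum_mul_right] at hle
    linarith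
  intro h0
  linarith [inner_sub_norm_nonpos w h0, mul_pos (sub_pos.2 hθ) (inner_sub_norm_self_pos hw)]

theorem not_nonneg_sq_of_im_pos {z : ℂ} (hz : 0 < z.im) : ¬ 0 ≤ z ^ 2 := by
  intro h
  obtain ⟨hre, him⟩ := le_def.1 h
  rw [zero_re, sq, mul_re] at hre
  rw [zero_im, sq, mul_im] at him
  have : z.re = 0 := by nlinarith
  nlinarith

end Complex

open Filter

theorem z_sq_mu_avoids_nonneg_axis_general
    (lam : ℕ → ℝ)
    (c : ℕ → ℝ) (hc : ∀ j, 0 ≤ c j) (hsum : Summable c) (hθ : (∑' j, c j) < 1)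
    (z : ℂ) (hz : 0 < z.im) :
    ¬ ∃ r : ℝ, 0 ≤ r ∧
      z ^ 2 * (1 + z ^ 2 * ∑' j, (c j : ℂ) / ((lam j : ℂ) ^ 2 - z ^ 2)) = (r : ℂ) := by
  rintro ⟨r, hr, hval⟩
  have key := Complex.not_nonneg_mul_one_add_mul_tsum_div (a := fun j => lam j ^ 2)
    (fun j => sq_nonneg _) hc hsum hθ (Complex.not_nonneg_sq_of_im_pos hz)
  push_cast at key
  exact key (hval ▸ Complex.zero_le_real.2 hr)

theorem z_sq_mu_avoids_nonneg_axis (lam : ℕ → ℝ) (hpos : ∀ j, 0 < lam j)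
    (htop : Tendsto lam atTop atTop)
    (c : ℕ → ℝ) (hc : ∀ j, 0 ≤ c j) (hsum : Summable c) (hθ : (∑' j, c j) < 1)
    (z : ℂ) (hz : 0 < z.im) :
    ¬ ∃ r : ℝ, 0 ≤ r ∧
      z ^ 2 * (1 + z ^ 2 * ∑' j, (c j : ℂ) / ((lam j : ℂ) ^ 2 - z ^ 2)) = (r : ℂ) :=
  z_sq_mu_avoids_nonneg_axis_general lam c hc hsum hθ z hz
end

section
/- Let (λ_j)_{j∈ℕ} be positive real numbers with λ_j → ∞, and let (c_j)_{j∈ℕ} be nonnegative real numbers with Σ_j c_j < ∞ and Σ_j c_j > 0. Define β(z) := Σ_j c_j/(z² − λ_j²) for z ∈ ℂ with z² ≠ λ_j² for all j (which holds automatically when Im z < 0). Then for every z ∈ ℂ with Im z < 0 one has β(z) ≠ 0. -/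
open Filter

/-! For `Im z < 0` every term of `z β(z) = ∑ c_j z / (z² - λ_j²)` has nonnegative imaginary
part, since `Im (z / (z² - s²)) = -Im z (|z|² + s²) / |z² - s²|²` for real `s`; a term with
`c_j > 0` makes it strictly positive, so `z β(z) ≠ 0`. Summability comes from
`|z² - s²| ≥ (Im z)²`, as both factors of `(z + s)(z - s)` have modulus at least `|Im z|`. -/

namespace Complex

theorem im_sq_le_norm_sq_sub_sq (w : ℂ) (s : ℝ) : w.im ^ 2 ≤ ‖w ^ 2 - (s : ℂ) ^ 2‖ := by
  rw [sq_sub_sq, norm_mul, ← sq_abs, sq]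
  exact mul_le_mul (by simpa using abs_im_le_norm (w + s)) (by simpa using abs_im_le_norm (w - s))
    (abs_nonneg _) (norm_nonneg _)

theorem sq_sub_sq_ne_zero_of_im_ne_zero {w : ℂ} (hw : w.im ≠ 0) (s : ℝ) :
    w ^ 2 - (s : ℂ) ^ 2 ≠ 0 := by
  intro h
  have := im_sq_le_norm_sq_sub_sq w s
  rw [h, norm_zero] at this
  exact hw (pow_eq_zero_iff two_ne_zero |>.mp (le_antisymm this (sq_nonneg _)))

theorem im_div_sq_sub_sq (w : ℂ) (s : ℝ) :
    (w / (w ^ 2 - (s : ℂ) ^ 2)).im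
      = -w.im * (normSq w + s ^ 2) / normSq (w ^ 2 - (s : ℂ) ^ 2) := by
  simp only [div_im, normSq_apply, sq, sub_re, sub_im, mul_re, mul_im, ofReal_re, ofReal_im]
  ring

theorem im_div_sq_sub_sq_pos {w : ℂ} (hw : w.im < 0) (s : ℝ) :
    0 < (w / (w ^ 2 - (s : ℂ) ^ 2)).im := by
  rw [im_div_sq_sub_sq]
  have hw₀ : w ≠ 0 := fun h => hw.ne (by simp [h])
  have := normSq_pos.mpr (sq_sub_sq_ne_zero_of_im_ne_zero hw.ne s)
  have := normSq_pos.mpr hw₀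
  have : 0 < -w.im := neg_pos.mpr hw
  positivity

theorem summable_ofReal_div_sq_sub_sq {ι : Type*} {c : ι → ℝ} (hc : Summable c) {w : ℂ}
    (hw : w.im ≠ 0) (s : ι → ℝ) :
    Summable fun j => (c j : ℂ) / (w ^ 2 - (s j : ℂ) ^ 2) := by
  refine Summable.of_norm_bounded ((summable_abs_iff.mpr hc).div_const (w.im ^ 2)) fun j => ?_
  rw [norm_div, norm_real, Real.norm_eq_abs]
  exact div_le_div_of_nonneg_left (abs_nonneg _) (by positivity) (im_sq_le_norm_sq_sub_sq w (s j))

theorem im_tsum_pos {ι : Type*} {f : ι → ℂ} (hf : Summable f) (h : ∀ i, 0 ≤ (f i).im)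
    (i : ι) (hi : 0 < (f i).im) : 0 < (∑' i, f i).im := by
  rw [im_tsum hf]
  exact (hf.mapL imCLM).tsum_pos h i hi

end Complex

theorem zhikov_function_nonvanishing_general (lam : ℕ → ℝ)
    (c : ℕ → ℝ) (hc : ∀ j, 0 ≤ c j) (hsum : Summable c) (hpos' : 0 < ∑' j, c j) :
    ∀ z : ℂ, z.im < 0 →
      (∑' j, (c j : ℂ) / (z ^ 2 - (lam j : ℂ) ^ 2)) ≠ 0 := by
  intro z hz hβ
  obtain ⟨j₀, hj₀⟩ : ∃ j, 0 < c j := by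
    by_contra! h
    exact hpos'.not_ge (tsum_nonpos h)
  have hterm : ∀ j, (z * ((c j : ℂ) / (z ^ 2 - (lam j : ℂ) ^ 2))).im
      = c j * (z / (z ^ 2 - (lam j : ℂ) ^ 2)).im := fun j => by
    rw [mul_div_left_comm, Complex.im_ofReal_mul]
  have hzβ : 0 < (z * ∑' j, (c j : ℂ) / (z ^ 2 - (lam j : ℂ) ^ 2)).im := by
    rw [← tsum_mul_left]
    refine Complex.im_tsum_pos ((Complex.summable_ofReal_div_sq_sub_sq hsum hz.ne lam).mul_left z)
      (fun j => ?_) j₀ ?_ <;> rw [hterm]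
    · exact mul_nonneg (hc j) (Complex.im_div_sq_sub_sq_pos hz _).le
    · exact mul_pos hj₀ (Complex.im_div_sq_sub_sq_pos hz _)
  simp [hβ] at hzβ

theorem zhikov_function_nonvanishing (lam : ℕ → ℝ) (hpos : ∀ j, 0 < lam j)
    (htop : Tendsto lam atTop atTop)
    (c : ℕ → ℝ) (hc : ∀ j, 0 ≤ c j) (hsum : Summable c) (hpos' : 0 < ∑' j, c j) :
    ∀ z : ℂ, z.im < 0 →
      (∑' j, (c j : ℂ) / (z ^ 2 - (lam j : ℂ) ^ 2)) ≠ 0 :=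
  zhikov_function_nonvanishing_general lam c hc hsum hpos'
end

section
/- Let (λ_j)_{j∈ℕ} be positive real numbers with λ_j → ∞, and let (c_j)_{j∈ℕ} be nonnegative real numbers with θ := Σ_j c_j < 1. Define μ(z) := 1 + z² Σ_j c_j/(λ_j² − z²) for z ∈ ℂ with z² ≠ λ_j² for all j (which holds automatically when Im z < 0). Then for every z ∈ ℂ with Im z < 0 one has μ(z) ≠ 0. -/
/-!
The real functional `v ↦ -Im (z v)` is positive at `1`, and it keeps `μ` away from `0`: by the
identity `Im (z · conj (r² - z²)) = (r² + |z|²) Im z`, every term satisfies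
`Im (z · z² / (r² - z²)) ≤ -Im z`, so `Im (z μ) ≤ (1 - θ) Im z < 0`. The same identity gives
`|z² / (r² - z²)| ≤ |z| / |Im z|` uniformly in `r`, so the series converges.
-/

open Filter Complex ComplexConjugate

theorem Complex.im_mul_conj_ofReal_sq_sub_sq (z : ℂ) (r : ℝ) :
    (z * conj ((r : ℂ) ^ 2 - z ^ 2)).im = (r ^ 2 + normSq z) * z.im := by
  simp only [mul_im, map_sub, conj_re, conj_im, sub_re, sub_im, pow_two, mul_re, ofReal_re,
    ofReal_im, normSq_apply]
  ring

theorem Complex.im_mul_sq_div_ofReal_sq_sub_sq_le {z : ℂ} (hz : z.im ≤ 0) (r : ℝ) :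
    (z * (z ^ 2 / ((r : ℂ) ^ 2 - z ^ 2))).im ≤ -z.im := by
  set d := (r : ℂ) ^ 2 - z ^ 2 with hd_def
  by_cases hd : d = 0
  · simp [hd, hz]
  have hsplit : z * (z ^ 2 / d) = -z + ((r ^ 2 / normSq d : ℝ) : ℂ) * (z * conj d) := by
    have hconj : conj d ≠ 0 := (map_ne_zero _).2 hd
    rw [ofReal_div, ← mul_conj]
    field_simp
    rw [hd_def]
    push_cast
    ring
  rw [hsplit, add_im, neg_im, im_ofReal_mul, im_mul_conj_ofReal_sq_sub_sq]
  have hcoef : 0 ≤ r ^ 2 / normSq d := div_nonneg (sq_nonneg r) (normSq_nonneg d)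
  nlinarith [mul_nonneg hcoef (add_nonneg (sq_nonneg r) (normSq_nonneg z))]

theorem Complex.norm_sq_div_ofReal_sq_sub_sq_le {z : ℂ} (hz : z.im < 0) (r : ℝ) :
    ‖z ^ 2 / ((r : ℂ) ^ 2 - z ^ 2)‖ ≤ ‖z‖ / -z.im := by
  set d := (r : ℂ) ^ 2 - z ^ 2
  have hz0 : 0 < ‖z‖ := norm_pos_iff.2 fun h => by simp [h] at hz
  have hd : ‖z‖ * -z.im ≤ ‖d‖ := by
    have h := abs_im_le_norm (z * conj d)
    rw [im_mul_conj_ofReal_sq_sub_sq, normSq_eq_norm_sq, norm_mul, RCLike.norm_conj,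
      abs_of_nonpos (mul_nonpos_of_nonneg_of_nonpos (by positivity) hz.le)] at h
    nlinarith [sq_nonneg r]
  rw [norm_div, norm_pow, div_le_div_iff₀ (by nlinarith) (neg_pos.2 hz)]
  nlinarith

theorem Complex.im_mul_one_add_tsum_le {ι : Type*} {z : ℂ} {c : ι → ℝ} {f : ι → ℂ}
    (hc : ∀ j, 0 ≤ c j) (hsum : Summable c) (hf : Summable fun j => (c j : ℂ) * f j)
    (hbound : ∀ j, (z * f j).im ≤ -z.im) :
    (z * (1 + ∑' j, (c j : ℂ) * f j)).im ≤ (1 - ∑' j, c j) * z.im := by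
  have hterm : ∀ j, (z * ((c j : ℂ) * f j)).im = c j * (z * f j).im := fun j => by
    rw [mul_left_comm, im_ofReal_mul]
  have hzf : Summable fun j => (z * ((c j : ℂ) * f j)).im := imCLM.summable (hf.mul_left z)
  have hle : ∑' j, c j * (z * f j).im ≤ ∑' j, c j * -z.im :=
    (hzf.congr hterm).tsum_le_tsum (fun j => mul_le_mul_of_nonneg_left (hbound j) (hc j))
      (hsum.mul_right _)
  rw [mul_add, mul_one, add_im, ← tsum_mul_left, im_tsum (hf.mul_left z), tsum_congr hterm]
  rw [tsum_mul_right] at hle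
  linarith

theorem mu_nonvanishing_lower_halfplane_general (lam : ℕ → ℝ)
    (c : ℕ → ℝ) (hc : ∀ j, 0 ≤ c j) (hsum : Summable c) (hθ : (∑' j, c j) < 1) :
    ∀ z : ℂ, z.im < 0 →
      (1 + z ^ 2 * ∑' j, (c j : ℂ) / ((lam j : ℂ) ^ 2 - z ^ 2)) ≠ 0 := by
  intro z hz
  set f : ℕ → ℂ := fun j => z ^ 2 / ((lam j : ℂ) ^ 2 - z ^ 2)
  have hseries : z ^ 2 * ∑' j, (c j : ℂ) / ((lam j : ℂ) ^ 2 - z ^ 2) = ∑' j, (c j : ℂ) * f j := by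
    rw [← tsum_mul_left]
    exact tsum_congr fun j => mul_div_left_comm _ _ _
  have hf : Summable fun j => (c j : ℂ) * f j := by
    refine (hsum.mul_right (‖z‖ / -z.im)).of_norm_bounded fun j => ?_
    rw [norm_mul, norm_real, Real.norm_of_nonneg (hc j)]
    exact mul_le_mul_of_nonneg_left (norm_sq_div_ofReal_sq_sub_sq_le hz (lam j)) (hc j)
  have him := im_mul_one_add_tsum_le hc hsum hf
    fun j => im_mul_sq_div_ofReal_sq_sub_sq_le hz.le (lam j)
  intro hμ
  rw [← hseries, hμ, mul_zero, zero_im] at him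
  nlinarith

theorem mu_nonvanishing_lower_halfplane (lam : ℕ → ℝ) (hpos : ∀ j, 0 < lam j)
    (htop : Tendsto lam atTop atTop)
    (c : ℕ → ℝ) (hc : ∀ j, 0 ≤ c j) (hsum : Summable c) (hθ : (∑' j, c j) < 1) :
    ∀ z : ℂ, z.im < 0 →
      (1 + z ^ 2 * ∑' j, (c j : ℂ) / ((lam j : ℂ) ^ 2 - z ^ 2)) ≠ 0 :=
  mu_nonvanishing_lower_halfplane_general lam c hc hsum hθ
end
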